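/- Let α ∈ (0,2). Then for every k ∈ ℝ, the function ξ ↦ (2 − 2cos(kξ)) ξ^{−(1+α)} is Lebesgue integrable on (0,∞) and c_{1,α} ∫_0^∞ (2 − 2cos(kξ)) ξ^{−(1+α)} dξ = |k|^α. -/

import Mathlib

/-!
Writing `Γ(1+α) ξ^{-(1+α)} = ∫₀^∞ t^α e^{-ξt} dt` and exchanging the order of integration
(everything is nonnegative), `Γ(1+α) ∫₀^∞ (1 - cos ξ) ξ^{-(1+α)} dξ` becomes `∫₀^∞ t^α L(t) dt`
with the Laplace transform `L(t) = ∫₀^∞ (1 - cos ξ) e^{-tξ} dξ = 1 / (t (1 + t²))`. The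
substitution `u = t²` and a second exchange, now with `1 / (1 + u) = ∫₀^∞ e^{-(1+u)x} dx`,
evaluate `∫₀^∞ t^{α-1} / (1 + t²) dt` as `Γ(α/2) Γ(1 - α/2) / 2`. By the duplication formula
`c_{1,α}` is exactly `Γ(1+α) / (Γ(α/2) Γ(1 - α/2))`, and the dependence on `k` is the scaling
`ξ ↦ |k| ξ`.
-/

open MeasureTheory Set

/-- The one-dimensional normalization constant
`c_{1,α} = 2^{α−1} α Γ((1+α)/2) / (√π Γ(1 − α/2))` of the fractional Laplacian. -/
noncomputable def fracLapConst (α : ℝ) : ℝ :=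
  2 ^ (α - 1) * α * Real.Gamma ((1 + α) / 2) / (Real.sqrt Real.pi * Real.Gamma (1 - α / 2))

open Real Filter Function Topology

section Tonelli

variable {X Y : Type*} [MeasurableSpace X] [MeasurableSpace Y] {μ : Measure X} {ν : Measure Y}
  [SFinite μ] [SFinite ν]

theorem integrable_integral_and_integral_integral_swap_of_nonneg {F : X → Y → ℝ}
    (hF : AEStronglyMeasurable (uncurry F) (μ.prod ν))
    (hF_nonneg : ∀ᵐ y ∂ν, ∀ᵐ x ∂μ, 0 ≤ F x y)
    (h_slice : ∀ᵐ y ∂ν, Integrable (F · y) μ)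
    (h_int : Integrable (fun y => ∫ x, F x y ∂μ) ν) :
    Integrable (fun x => ∫ y, F x y ∂ν) μ ∧ ∫ x, ∫ y, F x y ∂ν ∂μ = ∫ y, ∫ x, F x y ∂μ ∂ν := by
  have h_norm : Integrable (fun y => ∫ x, ‖F x y‖ ∂μ) ν := by
    refine h_int.congr ?_
    filter_upwards [hF_nonneg] with y hy
    exact integral_congr_ae (by filter_upwards [hy] with x hx using (norm_of_nonneg hx).symm)
  have hF_int : Integrable (uncurry F) (μ.prod ν) := (integrable_prod_iff' hF).2 ⟨h_slice, h_norm⟩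
  exact ⟨hF_int.integral_prod_left, integral_integral_swap hF_int⟩

end Tonelli

theorem integrableOn_and_integral_Ioi_swap_of_nonneg {F : ℝ → ℝ → ℝ} {f g : ℝ → ℝ}
    (hF : Measurable (uncurry F)) (hF_nonneg : ∀ x > 0, ∀ y > 0, 0 ≤ F x y)
    (hf : ∀ x > 0, ∫ y in Ioi 0, F x y = f x)
    (hg : ∀ y > 0, IntegrableOn (F · y) (Ioi 0) ∧ ∫ x in Ioi 0, F x y = g y)
    (hg_int : IntegrableOn g (Ioi 0)) :
    IntegrableOn f (Ioi 0) ∧ ∫ x in Ioi 0, f x = ∫ y in Ioi 0, g y := by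
  have hpos : ∀ᵐ x ∂(volume.restrict (Ioi (0 : ℝ))), 0 < x := ae_restrict_mem measurableSet_Ioi
  obtain ⟨h_int, h_swap⟩ := integrable_integral_and_integral_integral_swap_of_nonneg
    hF.aestronglyMeasurable
    (by filter_upwards [hpos] with y hy
        filter_upwards [hpos] with x hx using hF_nonneg x hx y hy)
    (by filter_upwards [hpos] with y hy using (hg y hy).1)
    (hg_int.congr (by filter_upwards [hpos] with y hy using ((hg y hy).2).symm))
  have hf_ae : (fun x => ∫ y in Ioi 0, F x y) =ᵐ[volume.restrict (Ioi 0)] f := by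
    filter_upwards [hpos] with x hx using hf x hx
  refine ⟨h_int.congr hf_ae, ?_⟩
  rw [← integral_congr_ae hf_ae, h_swap]
  exact integral_congr_ae (by filter_upwards [hpos] with y hy using (hg y hy).2)

theorem abs_sin_sub_mul_cos_le (t ξ : ℝ) : |sin ξ - t * cos ξ| ≤ 1 + |t| :=
  calc |sin ξ - t * cos ξ| ≤ |sin ξ| + |t| * |cos ξ| := by rw [← abs_mul]; exact abs_sub _ _
    _ ≤ 1 + |t| := add_le_add (abs_sin_le_one ξ)
        (mul_le_of_le_one_right (abs_nonneg t) (abs_cos_le_one ξ))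

theorem integrableOn_and_integral_one_sub_cos_mul_exp_neg_mul {t : ℝ} (ht : 0 < t) :
    IntegrableOn (fun ξ => (1 - cos ξ) * exp (-(t * ξ))) (Ioi 0) ∧
    ∫ ξ in Ioi 0, (1 - cos ξ) * exp (-(t * ξ)) = 1 / (t * (1 + t ^ 2)) := by
  have ht2 : 0 < 1 + t ^ 2 := by positivity
  set G : ℝ → ℝ := fun ξ => exp (-(t * ξ)) * -(1 / t + (sin ξ - t * cos ξ) / (1 + t ^ 2))
  have hG_deriv : ∀ ξ, HasDerivAt G ((1 - cos ξ) * exp (-(t * ξ))) ξ := by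
    intro ξ
    have hE : HasDerivAt (fun x => exp (-(t * x))) (exp (-(t * ξ)) * -t) ξ := by
      simpa using ((hasDerivAt_id ξ).const_mul t).neg.exp
    have hS := (((hasDerivAt_sin ξ).sub ((hasDerivAt_cos ξ).const_mul t)).div_const
      (1 + t ^ 2)).const_add (1 / t)
    refine (hE.mul hS.neg).congr_deriv ?_
    simp only [Pi.neg_apply, Pi.sub_apply]
    field_simp
    ring
  have hG_lim : Tendsto G atTop (𝓝 0) := by
    have hE : Tendsto (fun ξ => exp (-(t * ξ))) atTop (𝓝 0) :=
      tendsto_exp_neg_atTop_nhds_zero.comp (tendsto_id.const_mul_atTop ht)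
    refine hE.zero_mul_isBoundedUnder_le (isBoundedUnder_of ⟨1 / t + (1 + t), fun ξ => ?_⟩)
    have h_quot : |(sin ξ - t * cos ξ) / (1 + t ^ 2)| ≤ 1 + t := by
      rw [abs_div, abs_of_pos ht2]
      refine (div_le_self (abs_nonneg _) (by nlinarith)).trans ?_
      simpa [abs_of_pos ht] using abs_sin_sub_mul_cos_le t ξ
    simp only [comp_apply, norm_eq_abs, abs_neg]
    exact (abs_add_le _ _).trans (add_le_add (abs_of_pos (one_div_pos.2 ht)).le h_quot)
  have hnonneg : ∀ ξ ∈ Ioi (0 : ℝ), 0 ≤ (1 - cos ξ) * exp (-(t * ξ)) :=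
    fun ξ _ => mul_nonneg (sub_nonneg.2 (cos_le_one ξ)) (exp_pos _).le
  refine ⟨integrableOn_Ioi_deriv_of_nonneg' (fun ξ _ => hG_deriv ξ) hnonneg hG_lim, ?_⟩
  rw [integral_Ioi_of_hasDerivAt_of_nonneg' (fun ξ _ => hG_deriv ξ) hnonneg hG_lim]
  simp only [G, mul_zero, neg_zero, exp_zero, sin_zero, cos_zero]
  field_simp
  ring

theorem integrableOn_rpow_mul_exp_neg_mul_Ioi {a r : ℝ} (ha : 0 < a) (hr : 0 < r) :
    IntegrableOn (fun t : ℝ => t ^ (a - 1) * exp (-(r * t))) (Ioi 0) :=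
  .of_integral_ne_zero <| by
    rw [integral_rpow_mul_exp_neg_mul_Ioi ha hr]
    exact (mul_pos (by positivity) (Gamma_pos_of_pos ha)).ne'

theorem integrableOn_and_integral_rpow_div_one_add {s : ℝ} (hs0 : 0 < s) (hs1 : s < 1) :
    IntegrableOn (fun u : ℝ => u ^ (s - 1) / (1 + u)) (Ioi 0) ∧
    ∫ u in Ioi 0, u ^ (s - 1) / (1 + u) = Gamma s * Gamma (1 - s) := by
  have hΓ : ∫ x in Ioi 0, Gamma s * (x ^ ((1 - s) - 1) * exp (-(1 * x))) =
      Gamma s * Gamma (1 - s) := by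
    rw [integral_const_mul, integral_rpow_mul_exp_neg_mul_Ioi (by linarith) one_pos]
    simp
  rw [← hΓ]
  have hsplit : ∀ u x : ℝ, exp (-(1 + u) * x) = exp (-(1 * x)) * exp (-(x * u)) := by
    intro u x
    rw [← exp_add]
    ring_nf
  refine integrableOn_and_integral_Ioi_swap_of_nonneg
    (F := fun u x => u ^ (s - 1) * exp (-(1 + u) * x)) (by fun_prop)
    (fun u _ x _ => by positivity) (fun u hu => ?_) (fun x hx => ⟨?_, ?_⟩)
    ((integrableOn_rpow_mul_exp_neg_mul_Ioi (a := 1 - s) (by linarith) one_pos).const_mul _)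
  · rw [integral_const_mul, integral_exp_mul_Ioi (a := -(1 + u)) (by linarith) 0]
    have : 1 + u ≠ 0 := by positivity
    simp only [mul_zero, exp_zero]
    field_simp
  · simp_rw [hsplit, mul_left_comm _ (exp (-(1 * x)))]
    exact (integrableOn_rpow_mul_exp_neg_mul_Ioi hs0 hx).const_mul _
  · simp_rw [hsplit, mul_left_comm _ (exp (-(1 * x)))]
    rw [integral_const_mul, integral_rpow_mul_exp_neg_mul_Ioi hs0 hx,
      show 1 - s - 1 = -s by ring, rpow_neg hx.le, one_div, inv_rpow hx.le]
    ring

theorem integrableOn_and_integral_rpow_div_one_add_sq {α : ℝ} (h0 : 0 < α) (h2 : α < 2) :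
    IntegrableOn (fun t : ℝ => t ^ (α - 1) / (1 + t ^ 2)) (Ioi 0) ∧
    ∫ t in Ioi 0, t ^ (α - 1) / (1 + t ^ 2) = Gamma (α / 2) * Gamma (1 - α / 2) / 2 := by
  obtain ⟨h_int, h_val⟩ := integrableOn_and_integral_rpow_div_one_add (s := α / 2)
    (by linarith) (by linarith)
  set f : ℝ → ℝ := fun u => u ^ (α / 2 - 1) / (1 + u)
  have h_subst : ∀ x ∈ Ioi (0 : ℝ), x ^ ((2 : ℝ) - 1) • f (x ^ (2 : ℝ)) =
      x ^ (α - 1) / (1 + x ^ 2) := by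
    intro x hx
    simp only [f, smul_eq_mul]
    rw [← rpow_mul (le_of_lt hx), mul_div_assoc', ← rpow_add hx, rpow_two]
    congr 2
    ring
  constructor
  · exact ((integrableOn_Ioi_comp_rpow_iff' f two_ne_zero).2 h_int).congr_fun h_subst
      measurableSet_Ioi
  · have h := integral_comp_rpow_Ioi_of_pos (g := f) two_pos
    simp_rw [mul_smul] at h
    rw [integral_smul, setIntegral_congr_fun measurableSet_Ioi h_subst, h_val, smul_eq_mul] at h
    linarith

theorem integrableOn_and_integral_one_sub_cos_mul_rpow {α : ℝ} (h0 : 0 < α) (h2 : α < 2) :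
    IntegrableOn (fun ξ : ℝ => (1 - cos ξ) * ξ ^ (-(1 + α))) (Ioi 0) ∧
    ∫ ξ in Ioi 0, (1 - cos ξ) * ξ ^ (-(1 + α)) =
      Gamma (α / 2) * Gamma (1 - α / 2) / (2 * Gamma (1 + α)) := by
  have hΓ : 0 < Gamma (1 + α) := Gamma_pos_of_pos (by linarith)
  have h_gamma : ∀ ξ > 0, ∫ t in Ioi 0, (1 - cos ξ) * (t ^ ((1 + α) - 1) * exp (-(ξ * t))) =
      Gamma (1 + α) * ((1 - cos ξ) * ξ ^ (-(1 + α))) := by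
    intro ξ hξ
    rw [integral_const_mul, integral_rpow_mul_exp_neg_mul_Ioi (by linarith) hξ, one_div,
      inv_rpow hξ.le, ← rpow_neg hξ.le]
    ring
  have h_laplace : ∀ t > 0,
      IntegrableOn (fun ξ => (1 - cos ξ) * (t ^ ((1 + α) - 1) * exp (-(ξ * t)))) (Ioi 0) ∧
      ∫ ξ in Ioi 0, (1 - cos ξ) * (t ^ ((1 + α) - 1) * exp (-(ξ * t))) =
        t ^ (α - 1) / (1 + t ^ 2) := by
    intro t ht
    obtain ⟨h_int, h_val⟩ := integrableOn_and_integral_one_sub_cos_mul_exp_neg_mul ht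
    simp_rw [mul_comm _ t, mul_left_comm (1 - cos _)]
    refine ⟨h_int.const_mul _, ?_⟩
    rw [integral_const_mul, h_val, show 1 + α - 1 = 1 + (α - 1) by ring, rpow_add ht, rpow_one]
    field_simp
  obtain ⟨hg_int, hg_val⟩ := integrableOn_and_integral_rpow_div_one_add_sq h0 h2
  obtain ⟨hf_int, hf_val⟩ := integrableOn_and_integral_Ioi_swap_of_nonneg (by fun_prop)
    (fun ξ _ t _ => by have := cos_le_one ξ; positivity) h_gamma h_laplace hg_int
  refine ⟨(integrable_const_mul_iff hΓ.ne'.isUnit _).1 hf_int, ?_⟩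
  rw [integral_const_mul, hg_val] at hf_val
  rw [eq_div_iff (by positivity)]
  linear_combination 2 * hf_val

theorem fracLapConst_mul_Gamma_div_Gamma {α : ℝ} (h0 : 0 < α) (h2 : α < 2) :
    fracLapConst α * (Gamma (α / 2) * Gamma (1 - α / 2) / Gamma (1 + α)) = 1 := by
  have h_dup := Gamma_mul_Gamma_add_half (α / 2)
  rw [show α / 2 + 1 / 2 = (1 + α) / 2 by ring, show 2 * (α / 2) = α by ring] at h_dup
  have h_succ : Gamma (1 + α) = α * Gamma α := by rw [add_comm, Gamma_add_one h0.ne']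
  have h_pow : (2 : ℝ) ^ (α - 1) * 2 ^ (1 - α) = 1 := by
    rw [← rpow_add two_pos]; norm_num
  have hΓα := Gamma_pos_of_pos h0
  have hΓ := Gamma_pos_of_pos (show 0 < 1 - α / 2 by linarith)
  have hπ := sqrt_pos.2 pi_pos
  rw [fracLapConst, h_succ, div_mul_div_comm, div_eq_one_iff_eq (by positivity)]
  linear_combination (2 ^ (α - 1) * α * Gamma (1 - α / 2)) * h_dup +
    (α * Gamma (1 - α / 2) * Gamma α * √π) * h_pow

section Scaling

variable {g : ℝ → ℝ} {a c : ℝ}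

theorem comp_mul_left_mul_rpow_eqOn_Ioi (hc : 0 < c) :
    EqOn (fun ξ => g (c * ξ) * ξ ^ a) (fun ξ => c ^ (-a) * (g (c * ξ) * (c * ξ) ^ a)) (Ioi 0) := by
  intro ξ hξ
  dsimp only
  rw [mul_rpow hc.le (le_of_lt hξ), rpow_neg hc.le]
  field_simp

theorem IntegrableOn.comp_mul_left_mul_rpow_Ioi (hg : IntegrableOn (fun y => g y * y ^ a) (Ioi 0))
    (hc : 0 < c) : IntegrableOn (fun ξ => g (c * ξ) * ξ ^ a) (Ioi 0) := by
  refine IntegrableOn.congr_fun ?_ (comp_mul_left_mul_rpow_eqOn_Ioi hc).symm measurableSet_Ioi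
  refine Integrable.const_mul ?_ _
  exact (integrableOn_Ioi_comp_mul_left_iff (fun y => g y * y ^ a) 0 hc).2 (by rwa [mul_zero])

theorem integral_comp_mul_left_mul_rpow_Ioi (hc : 0 < c) :
    ∫ ξ in Ioi 0, g (c * ξ) * ξ ^ a = c ^ (-(a + 1)) * ∫ y in Ioi 0, g y * y ^ a := by
  rw [setIntegral_congr_fun measurableSet_Ioi (comp_mul_left_mul_rpow_eqOn_Ioi hc),
    integral_const_mul, integral_comp_mul_left_Ioi (fun y => g y * y ^ a) 0 hc, mul_zero,
    smul_eq_mul, ← mul_assoc, ← rpow_neg_one, ← rpow_add hc, neg_add]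

end Scaling

/-- For `α ∈ (0,2)` and every `k ∈ ℝ`, the function `ξ ↦ (2 − 2cos(kξ)) ξ^{−(1+α)}` is
integrable on `(0,∞)` and `c_{1,α} ∫_0^∞ (2 − 2cos(kξ)) ξ^{−(1+α)} dξ = |k|^α`:
the hypersingular-integral and pseudo-differential definitions of `(−Δ)^{α/2}` agree. -/
theorem stmt17 (α : ℝ) (hα : α ∈ Set.Ioo (0:ℝ) 2) :
    ∀ k : ℝ,
      IntegrableOn (fun ξ : ℝ => (2 - 2 * Real.cos (k * ξ)) * ξ ^ (-(1 + α)))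
        (Set.Ioi 0) volume ∧
      fracLapConst α * (∫ ξ in Set.Ioi (0:ℝ), (2 - 2 * Real.cos (k * ξ)) * ξ ^ (-(1 + α))) =
        |k| ^ α := by
  obtain ⟨h0, h2⟩ := hα
  intro k
  obtain ⟨h_int, h_val⟩ := integrableOn_and_integral_one_sub_cos_mul_rpow h0 h2
  have h_abs : (fun ξ : ℝ => (2 - 2 * cos (k * ξ)) * ξ ^ (-(1 + α))) =
      fun ξ => 2 * ((1 - cos (|k| * ξ)) * ξ ^ (-(1 + α))) := by
    funext ξ
    rcases abs_choice k with hk | hk <;> simp only [hk, neg_mul, cos_neg] <;> ring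
  rw [h_abs]
  rcases (abs_nonneg k).eq_or_lt with hk | hk
  · simp [← hk, zero_rpow h0.ne']
  refine ⟨(IntegrableOn.comp_mul_left_mul_rpow_Ioi (g := fun y => 1 - cos y) h_int hk).const_mul 2,
    ?_⟩
  rw [integral_const_mul, integral_comp_mul_left_mul_rpow_Ioi (g := fun y => 1 - cos y) hk, h_val,
    show -(-(1 + α) + 1) = α by ring]
  linear_combination |k| ^ α * fracLapConst_mul_Gamma_div_Gamma h0 h2
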